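/- Let C ⊂ S^d be a spherical convex body with Δ(C) > π/2 and let L ⊃ C be a lune with Δ(L) = Δ(C). Then the centers of the two (d−1)-dimensional hemispheres bounding L belong to the boundary of C and both are smooth points of the boundary of C. -/

import Mathlib

noncomputable section

/-- Euclidean space ℝⁿ. -/
abbrev Esp (n : ℕ) := EuclideanSpace ℝ (Fin n)

/-- The unit sphere in ℝⁿ. -/
def uSphere (n : ℕ) : Set (Esp n) := {x | ‖x‖ = 1}

/-- Geodesic (angular) distance between unit vectors. -/
def sdist {n : ℕ} (a b : Esp n) : ℝ := Real.arccos (inner ℝ a b : ℝ)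

/-- Closed hemisphere with center `m`. -/
def Hemi {n : ℕ} (m : Esp n) : Set (Esp n) := {x ∈ uSphere n | 0 ≤ (inner ℝ m x : ℝ)}

/-- The great sphere (great circle for n = 3) bounding the hemisphere centered at `m`. -/
def gSphere {n : ℕ} (m : Esp n) : Set (Esp n) := {x ∈ uSphere n | (inner ℝ m x : ℝ) = 0}

/-- The shorter great-circle arc between `a` and `b`: points through which a
minimizing geodesic from `a` to `b` passes. -/
def Arc {n : ℕ} (a b : Esp n) : Set (Esp n) :=
  {x ∈ uSphere n | sdist a x + sdist x b = sdist a b}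

/-- Spherically convex set: contained in the sphere, no antipodal pairs, and
closed under taking shorter arcs. -/
def SphConvex {n : ℕ} (C : Set (Esp n)) : Prop :=
  C ⊆ uSphere n ∧ (∀ x ∈ C, -x ∉ C) ∧ ∀ a ∈ C, ∀ b ∈ C, Arc a b ⊆ C

/-- Interior of a subset of the sphere relative to the sphere. -/
def sphInterior {n : ℕ} (C : Set (Esp n)) : Set (Esp n) :=
  {x ∈ uSphere n | ∃ ε > 0, ∀ y ∈ uSphere n, dist y x < ε → y ∈ C}

/-- Spherical convex body: closed, spherically convex, with nonempty interior
relative to the sphere. -/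
def SphBody {n : ℕ} (C : Set (Esp n)) : Prop :=
  SphConvex C ∧ IsClosed C ∧ (sphInterior C).Nonempty

/-- Boundary of a closed subset of the sphere relative to the sphere. -/
def sphBoundary {n : ℕ} (C : Set (Esp n)) : Set (Esp n) := C \ sphInterior C

/-- `g`, `h` are centers of two distinct non-opposite hemispheres. -/
def IsLune {n : ℕ} (g h : Esp n) : Prop :=
  g ∈ uSphere n ∧ h ∈ uSphere n ∧ g ≠ h ∧ g ≠ -h

/-- The lune determined by hemisphere centers `g` and `h`. -/
def Lune {n : ℕ} (g h : Esp n) : Set (Esp n) := Hemi g ∩ Hemi h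

/-- The (d-1)-dimensional hemisphere `G/H` bounding the lune `G ∩ H`:
part of the great sphere of `G` lying in `H`.  (A semicircle when n = 3.) -/
def semic {n : ℕ} (g h : Esp n) : Set (Esp n) :=
  {x ∈ uSphere n | (inner ℝ g x : ℝ) = 0 ∧ 0 ≤ (inner ℝ h x : ℝ)}

/-- The center of the bounding hemisphere `G/H` of the lune `G ∩ H`:
the normalized projection of `h` onto the hyperplane orthogonal to `g`. -/
def scCenter {n : ℕ} (g h : Esp n) : Esp n :=
  ‖h - (inner ℝ g h : ℝ) • g‖⁻¹ • (h - (inner ℝ g h : ℝ) • g)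

/-- Thickness of a lune: distance between the centers of its two bounding
hemispheres. -/
def lthick {n : ℕ} (g h : Esp n) : ℝ := sdist (scCenter g h) (scCenter h g)

/-- Thickness of a convex body: minimal thickness of a lune containing it. -/
def thick {n : ℕ} (C : Set (Esp n)) : ℝ :=
  sInf {t | ∃ g h, IsLune g h ∧ C ⊆ Lune g h ∧ lthick g h = t}

/-- Reduced spherical body. -/
def Reduced {n : ℕ} (R : Set (Esp n)) : Prop :=
  SphBody R ∧ ∀ Z, SphBody Z → Z ⊆ R → Z ≠ R → thick Z < thick R

/-- Geodesic diameter of a set on the sphere. -/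
def sdiam {n : ℕ} (C : Set (Esp n)) : ℝ :=
  sSup {t | ∃ a ∈ C, ∃ b ∈ C, sdist a b = t}

/-- The hemisphere centered at `m` supports `C` at `p`. -/
def SupportsAt {n : ℕ} (C : Set (Esp n)) (m p : Esp n) : Prop :=
  m ∈ uSphere n ∧ C ⊆ Hemi m ∧ p ∈ C ∧ (inner ℝ m p : ℝ) = 0

/-- The hemisphere centered at `m` supports `C`. -/
def Supports {n : ℕ} (C : Set (Esp n)) (m : Esp n) : Prop := ∃ p, SupportsAt C m p

/-- The width of `C` determined by the supporting hemisphere centered at `m`: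
minimal thickness of a lune `M ∩ M*` over supporting hemispheres `M*` of `C`. -/
def sWidth {n : ℕ} (C : Set (Esp n)) (m : Esp n) : ℝ :=
  sInf {t | ∃ h, Supports C h ∧ IsLune m h ∧ C ⊆ Lune m h ∧ lthick m h = t}

/-- `C` is of constant width `w`. -/
def ConstWidth {n : ℕ} (C : Set (Esp n)) (w : ℝ) : Prop :=
  ∀ m, Supports C m → sWidth C m = w

/-- Extreme point of a spherically convex set. -/
def ExtremeP {n : ℕ} (C : Set (Esp n)) (e : Esp n) : Prop :=
  e ∈ C ∧ ∀ a ∈ C, ∀ b ∈ C, e ∈ Arc a b → e = a ∨ e = b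

/-- `p` is a smooth boundary point: exactly one hemisphere supports `C` at `p`. -/
def SmoothPoint {n : ℕ} (C : Set (Esp n)) (p : Esp n) : Prop :=
  ∃! m, SupportsAt C m p

/-- Strict convexity: the boundary contains no nondegenerate great-circle arc. -/
def StrictlyConvexS {n : ℕ} (C : Set (Esp n)) : Prop :=
  ∀ a ∈ sphBoundary C, ∀ b ∈ sphBoundary C, Arc a b ⊆ sphBoundary C → a = b

end

/-!
Let `G ∩ H` be a thinnest lune containing `C`, with unit centers `g`, `h`. Its thickness is
`arccos (-⟪g, h⟫)`, so `Δ(C) > π/2` means `⟪g, h⟫ > 0`, and minimality means that no hemisphere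
`M ⊇ C` has `⟪m, h⟫ < ⟪g, h⟫`. The center `c` of `G/H` satisfies `h = ⟪g, h⟫ g + s c` with `s > 0`.
If `c ∉ C`, a vector `v` separating `c` from the cone over `C` gives `⟪v, h⟫ < ⟪g, h⟫ ⟪v, g⟫`, and
tilting `g` to `g + ε v` yields a hemisphere `M ⊇ C` violating minimality. So `c ∈ C`, and `c` lies
on the boundary great sphere of `G`. If `M` supports `C` at `c`, then `⟪m, h⟫ = ⟪g, h⟫ ⟪m, g⟫`,
and minimality forces `⟪m, g⟫ = 1`, i.e. `M = G`.
-/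

open Real Set Filter InnerProductGeometry NormedSpace
open scoped RealInnerProductSpace Topology

theorem InnerProductGeometry.angle_add_angle_add_of_ne_zero {V : Type*} [NormedAddCommGroup V]
    [InnerProductSpace ℝ V] {x y : V} (hx : x ≠ 0) (hy : y ≠ 0) :
    angle x (x + y) + angle (x + y) y = angle x y := by
  have h := EuclideanGeometry.angle_add_of_ne_of_ne hx.symm hy.symm (wbtw_midpoint ℝ x y)
  simpa only [EuclideanGeometry.angle, vsub_eq_sub, sub_zero, midpoint_eq_smul_add,
    angle_smul_right_of_pos _ _ (by norm_num : (0 : ℝ) < ⅟2),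
    angle_smul_left_of_pos _ _ (by norm_num : (0 : ℝ) < ⅟2)] using h

theorem NormedSpace.continuousAt_normalize {V : Type*} [NormedAddCommGroup V] [NormedSpace ℝ V]
    {x : V} (hx : x ≠ 0) : ContinuousAt normalize x :=
  (continuous_norm.continuousAt.inv₀ (norm_ne_zero_iff.2 hx)).smul continuousAt_id

variable {n : ℕ}

theorem sdist_normalize (x y : Esp n) : sdist (normalize x) (normalize y) = angle x y := by
  rw [sdist, angle, NormedSpace.normalize, NormedSpace.normalize, real_inner_smul_left,
    real_inner_smul_right]
  ring_nf

theorem normalize_add_mem_arc {x y : Esp n} (hx : x ≠ 0) (hy : y ≠ 0) (hxy : x + y ≠ 0) :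
    normalize (x + y) ∈ Arc (normalize x) (normalize y) :=
  ⟨norm_normalize hxy, by simp only [sdist_normalize, angle_add_angle_add_of_ne_zero hx hy]⟩

theorem sphInterior_subset (C : Set (Esp n)) : sphInterior C ⊆ C := fun _ ⟨hp, _, hε, hball⟩ ↦
  hball _ hp (by simpa using hε)

theorem exists_mem_inner_pos_of_mem_sphInterior {C : Set (Esp n)} {p w : Esp n}
    (hp : p ∈ sphInterior C) (hw : w ≠ 0) (hpw : ⟪w, p⟫ = 0) : ∃ y ∈ C, 0 < ⟪w, y⟫ := by
  obtain ⟨hp1, ε, hε, hball⟩ := hp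
  have hp0 : p ≠ 0 := ne_zero_of_norm_ne_zero (by simp [show ‖p‖ = 1 from hp1])
  have hlim : Tendsto (fun δ : ℝ ↦ normalize (p + δ • w)) (𝓝 0) (𝓝 p) := by
    conv => rhs; rw [← normalize_eq_self_of_norm_eq_one hp1]
    refine (continuousAt_normalize hp0).tendsto.comp ?_
    exact Continuous.tendsto' (by fun_prop) 0 p (by simp)
  obtain ⟨δ, hδp, hδ⟩ := (((hlim.eventually (Metric.ball_mem_nhds p hε)).filter_mono
    nhdsWithin_le_nhds).and (self_mem_nhdsWithin (s := Ioi 0))).exists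
  have hpos : 0 < ⟪w, p + δ • w⟫ := by
    rw [inner_add_right, hpw, zero_add, real_inner_smul_right, real_inner_self_eq_norm_sq]
    exact mul_pos hδ (pow_pos (norm_pos_iff.2 hw) 2)
  have hne : p + δ • w ≠ 0 := by
    rintro h0
    simp [h0] at hpos
  refine ⟨_, hball _ (norm_normalize hne) hδp, ?_⟩
  rw [NormedSpace.normalize, real_inner_smul_right]
  exact mul_pos (inv_pos.2 (norm_pos_iff.2 hne)) hpos

namespace SphConvex

variable {C : Set (Esp n)}

def cone (hC : SphConvex C) : PointedCone ℝ (Esp n) where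
  carrier := {z | z = 0 ∨ normalize z ∈ C}
  zero_mem' := Or.inl rfl
  add_mem' := by
    rintro x y (rfl | hx) (rfl | hy)
    · simp
    · simp [hy]
    · simp [hx]
    by_cases hx0 : x = 0
    · simp [hx0, hy]
    by_cases hy0 : y = 0
    · simp [hy0, hx]
    by_cases hxy : x + y = 0
    · rw [eq_neg_of_add_eq_zero_left hxy, normalize_neg] at hx
      exact absurd hx (hC.2.1 _ hy)
    exact Or.inr (hC.2.2 _ hx _ hy (normalize_add_mem_arc hx0 hy0 hxy))
  smul_mem' := by
    rintro ⟨r, hr⟩ z (rfl | hz)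
    · simp
    rcases hr.eq_or_lt with rfl | hr
    · simp
    exact Or.inr (by simpa [normalize_smul_of_pos hr] using hz)

theorem exists_inner_nonneg_of_notMem (hC : SphConvex C) (hCc : IsClosed C) {c : Esp n}
    (hc : ‖c‖ = 1) (hcC : c ∉ C) : ∃ v, (∀ x ∈ C, 0 ≤ ⟪v, x⟫) ∧ ⟪v, c⟫ < 0 := by
  have hc0 : c ≠ 0 := ne_zero_of_norm_ne_zero (by simp [hc])
  have hcK : c ∉ Submodule.closure hC.cone := by
    intro hcK
    have := mem_closure_image (continuousAt_normalize hc0) hcK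
    rw [normalize_eq_self_of_norm_eq_one hc] at this
    have himage : NormedSpace.normalize '' (hC.cone : Set (Esp n)) ⊆ {0} ∪ C := by
      rintro _ ⟨z, rfl | hz, rfl⟩
      · simp
      · exact Or.inr hz
    rcases (isClosed_singleton.union hCc).closure_subset_iff.2 himage this with hc0' | hcC'
    · exact hc0 hc0'
    · exact hcC hcC'
  obtain ⟨v, hv, hvc⟩ := ProperCone.hyperplane_separation' _ hcK
  refine ⟨v, fun x hx ↦ ?_, by rwa [real_inner_comm]⟩
  rw [real_inner_comm]
  refine hv x (subset_closure (Or.inr ?_))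
  rwa [normalize_eq_self_of_norm_eq_one (hC.1 hx)]

end SphConvex

theorem norm_sub_inner_smul_sq {V : Type*} [NormedAddCommGroup V] [InnerProductSpace ℝ V]
    {g h : V} (hg : ‖g‖ = 1) (hh : ‖h‖ = 1) : ‖h - ⟪g, h⟫ • g‖ ^ 2 = 1 - ⟪g, h⟫ ^ 2 := by
  rw [norm_sub_sq_real, real_inner_smul_right, norm_smul, mul_pow, Real.norm_eq_abs, sq_abs,
    hg, hh, real_inner_comm]
  ring

theorem scCenter_eq_normalize (g h : Esp n) : scCenter g h = normalize (h - ⟪g, h⟫ • g) := rfl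

theorem eq_inner_smul_add_smul_scCenter (g h : Esp n) :
    h = ⟪g, h⟫ • g + ‖h - ⟪g, h⟫ • g‖ • scCenter g h := by
  rw [scCenter_eq_normalize, norm_smul_normalize]
  abel

theorem inner_scCenter_left {g : Esp n} (hg : ‖g‖ = 1) (h : Esp n) : ⟪g, scCenter g h⟫ = 0 := by
  rw [scCenter, real_inner_smul_right, inner_sub_right, real_inner_smul_right,
    real_inner_self_eq_norm_sq, hg]
  ring

namespace IsLune

variable {g h : Esp n}

theorem symm (hl : IsLune g h) : IsLune h g :=
  ⟨hl.2.1, hl.1, hl.2.2.1.symm, fun e ↦ hl.2.2.2 (by rw [e, neg_neg])⟩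

theorem abs_inner_lt_one (hl : IsLune g h) : |⟪g, h⟫| < 1 := by
  have hg : ‖g‖ = 1 := hl.1
  have hh : ‖h‖ = 1 := hl.2.1
  obtain ⟨hlow, hup⟩ := abs_le.1 (by simpa [hg, hh] using abs_real_inner_le_norm g h)
  refine abs_lt.2 ⟨lt_of_le_of_ne hlow fun e ↦ hl.2.2.2 ?_,
    lt_of_le_of_ne hup fun e ↦ hl.2.2.1 ((inner_eq_one_iff_of_norm_eq_one hg hh).1 e)⟩
  exact (inner_eq_one_iff_of_norm_eq_one hg (show ‖-h‖ = 1 by rwa [norm_neg])).1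
    (show ⟪g, -h⟫ = 1 by rw [inner_neg_right, ← e, neg_neg])

theorem sub_inner_smul_ne_zero (hl : IsLune g h) : h - ⟪g, h⟫ • g ≠ 0 := by
  intro h0
  have := norm_sub_inner_smul_sq hl.1 hl.2.1
  rw [h0, norm_zero] at this
  nlinarith [abs_lt.1 hl.abs_inner_lt_one]

theorem norm_scCenter (hl : IsLune g h) : ‖scCenter g h‖ = 1 :=
  norm_normalize hl.sub_inner_smul_ne_zero

theorem lthick_eq_arccos (hl : IsLune g h) : lthick g h = arccos (-⟪g, h⟫) := by
  have hg : ‖g‖ = 1 := hl.1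
  have hh : ‖h‖ = 1 := hl.2.1
  have hgh := norm_sub_inner_smul_sq hg hh
  have hhg := norm_sub_inner_smul_sq hh hg
  rw [real_inner_comm] at hhg
  have hnorm : ‖g - ⟪g, h⟫ • h‖ = ‖h - ⟪g, h⟫ • g‖ :=
    (sq_eq_sq₀ (norm_nonneg _) (norm_nonneg _)).1 (hhg.trans hgh.symm)
  have hinner : ⟪h - ⟪g, h⟫ • g, g - ⟪g, h⟫ • h⟫ = -⟪g, h⟫ * (1 - ⟪g, h⟫ ^ 2) := by
    rw [inner_sub_left, inner_sub_right, inner_sub_right, real_inner_smul_left,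
      real_inner_smul_left, real_inner_smul_right, real_inner_smul_right,
      real_inner_self_eq_norm_sq, real_inner_self_eq_norm_sq, hg, hh, real_inner_comm h g]
    ring
  have hpos : 0 < 1 - ⟪g, h⟫ ^ 2 := by nlinarith [abs_lt.1 hl.abs_inner_lt_one]
  rw [lthick, scCenter_eq_normalize, scCenter_eq_normalize, sdist_normalize, real_inner_comm g h,
    angle, hinner, hnorm, ← sq, hgh, mul_div_cancel_right₀ _ hpos.ne']

end IsLune

theorem exists_pos_inner_add_smul_lt_mul_norm {V : Type*} [NormedAddCommGroup V]
    [InnerProductSpace ℝ V] {g h v : V} (hg : ‖g‖ = 1) (ht : 0 < ⟪g, h⟫)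
    (hv : ⟪v, h⟫ < ⟪g, h⟫ * ⟪v, g⟫) :
    ∃ ε : ℝ, 0 < ε ∧ ⟪g + ε • v, h⟫ < ⟪g, h⟫ * ‖g + ε • v‖ := by
  set A := 2 * ⟪g, h⟫ * (⟪v, h⟫ - ⟪g, h⟫ * ⟪v, g⟫)
  set B := ⟪v, h⟫ ^ 2 - ⟪g, h⟫ ^ 2 * ‖v‖ ^ 2
  have hA : A < 0 := mul_neg_of_pos_of_neg (by positivity) (by linarith)
  have hlim : Tendsto (fun ε : ℝ ↦ A + ε * B) (𝓝 0) (𝓝 A) :=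
    Continuous.tendsto' (by fun_prop) 0 A (by simp)
  obtain ⟨ε, hεB, hε⟩ := (((hlim.eventually (gt_mem_nhds hA)).filter_mono nhdsWithin_le_nhds).and
    (self_mem_nhdsWithin (s := Ioi 0))).exists
  refine ⟨ε, hε, lt_of_pow_lt_pow_left₀ 2 (by positivity) ?_⟩
  have hsq : ⟪g + ε • v, h⟫ ^ 2 - (⟪g, h⟫ * ‖g + ε • v‖) ^ 2 = ε * (A + ε * B) := by
    rw [mul_pow, norm_add_sq_real, inner_add_left, real_inner_smul_left, real_inner_smul_right,
      norm_smul, mul_pow, Real.norm_eq_abs, sq_abs, hg, real_inner_comm v g]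
    ring
  nlinarith [mul_neg_of_pos_of_neg (show (0 : ℝ) < ε from hε) hεB]

theorem thick_le_lthick {C : Set (Esp n)} {g h : Esp n} (hl : IsLune g h)
    (hsub : C ⊆ Lune g h) : thick C ≤ lthick g h :=
  csInf_le ⟨0, by rintro _ ⟨_, _, _, _, rfl⟩; exact arccos_nonneg _⟩ ⟨g, h, hl, hsub, rfl⟩

structure IsThinnestLune (C : Set (Esp n)) (g h : Esp n) : Prop where
  isLune : IsLune g h
  subset : C ⊆ Lune g h
  lthick_eq : lthick g h = thick C

namespace IsThinnestLune

variable {C : Set (Esp n)} {g h : Esp n}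

theorem symm (hL : IsThinnestLune C g h) : IsThinnestLune C h g where
  isLune := hL.isLune.symm
  subset _ hx := ⟨(hL.subset hx).2, (hL.subset hx).1⟩
  lthick_eq := by
    rw [hL.isLune.symm.lthick_eq_arccos, real_inner_comm, ← hL.isLune.lthick_eq_arccos,
      hL.lthick_eq]

theorem inner_pos (hL : IsThinnestLune C g h) (ht : π / 2 < thick C) : 0 < ⟪g, h⟫ := by
  rw [← hL.lthick_eq, hL.isLune.lthick_eq_arccos, ← not_le, arccos_le_pi_div_two] at ht
  linarith

/-- Replacing `G` by a hemisphere `M ⊇ C` gives a lune of thickness `arccos (-⟪m, h⟫)`. -/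
theorem inner_le_inner (hL : IsThinnestLune C g h) (hC : (sphInterior C).Nonempty) {m : Esp n}
    (hm : ‖m‖ = 1) (hmC : C ⊆ Hemi m) : ⟪g, h⟫ ≤ ⟪m, h⟫ := by
  have hh : ‖h‖ = 1 := hL.isLune.2.1
  by_contra! hlt
  have hmh : m ≠ h := by
    rintro rfl
    rw [real_inner_self_eq_norm_sq, hm] at hlt
    have := real_inner_le_norm g m
    rw [hL.isLune.1, hm] at this
    linarith
  have hmh' : m ≠ -h := by
    rintro rfl
    obtain ⟨p, hp⟩ := hC
    have hpC := sphInterior_subset C hp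
    have hhp : ⟪h, p⟫ = 0 :=
      le_antisymm (by simpa using (hmC hpC).2) (hL.subset hpC).2.2
    obtain ⟨y, hyC, hy⟩ :=
      exists_mem_inner_pos_of_mem_sphInterior hp (ne_zero_of_norm_ne_zero (by simp [hh])) hhp
    have := (hmC hyC).2
    rw [inner_neg_left] at this
    linarith
  have hl : IsLune m h := ⟨hm, hh, hmh, hmh'⟩
  have hle := thick_le_lthick hl fun x hx ↦ ⟨hmC hx, (hL.subset hx).2⟩
  rw [hl.lthick_eq_arccos, ← hL.lthick_eq, hL.isLune.lthick_eq_arccos] at hle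
  have hmh1 := neg_le_of_abs_le (by simpa [hm, hh] using abs_real_inner_le_norm m h)
  have hgh1 := (abs_lt.1 hL.isLune.abs_inner_lt_one).2
  exact hle.not_gt (arccos_lt_arccos (by linarith) (by linarith) (by linarith))

theorem scCenter_mem (hL : IsThinnestLune C g h) (hC : SphBody C) (ht : π / 2 < thick C) :
    scCenter g h ∈ C := by
  have hg : ‖g‖ = 1 := hL.isLune.1
  have htpos := hL.inner_pos ht
  by_contra hcC
  obtain ⟨v, hvC, hvc⟩ :=
    hC.1.exists_inner_nonneg_of_notMem hC.2.1 hL.isLune.norm_scCenter hcC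
  have hvh : ⟪v, h⟫ < ⟪g, h⟫ * ⟪v, g⟫ := by
    conv_lhs => rw [eq_inner_smul_add_smul_scCenter g h]
    rw [inner_add_right, real_inner_smul_right, real_inner_smul_right, real_inner_comm g v]
    have := norm_pos_iff.2 hL.isLune.sub_inner_smul_ne_zero
    nlinarith
  obtain ⟨ε, hε, hlt⟩ := exists_pos_inner_add_smul_lt_mul_norm hg htpos hvh
  have hw : g + ε • v ≠ 0 := by
    rintro h0
    simp [h0] at hlt
  have hwpos := norm_pos_iff.2 hw
  refine (hL.inner_le_inner hC.2.2 (norm_normalize hw) fun x hx ↦ ⟨hC.1.1 hx, ?_⟩).not_gt ?_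
  · rw [NormedSpace.normalize, real_inner_smul_left, inner_add_left, real_inner_smul_left]
    have := (hL.subset hx).1.2
    have := hvC x hx
    positivity
  · rw [NormedSpace.normalize, real_inner_smul_left, inv_mul_lt_iff₀ hwpos, mul_comm]
    exact hlt

theorem scCenter_mem_sphBoundary (hL : IsThinnestLune C g h) (hC : SphBody C)
    (ht : π / 2 < thick C) : scCenter g h ∈ sphBoundary C := by
  refine ⟨hL.scCenter_mem hC ht, fun hint ↦ ?_⟩
  have hg0 : -g ≠ 0 := ne_zero_of_norm_ne_zero (by simp [show ‖g‖ = 1 from hL.isLune.1])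
  obtain ⟨y, hyC, hy⟩ := exists_mem_inner_pos_of_mem_sphInterior hint hg0
    (by rw [inner_neg_left, inner_scCenter_left hL.isLune.1, neg_zero])
  have := (hL.subset hyC).1.2
  rw [inner_neg_left] at hy
  linarith

theorem smoothPoint_scCenter (hL : IsThinnestLune C g h) (hC : SphBody C)
    (ht : π / 2 < thick C) : SmoothPoint C (scCenter g h) := by
  have hg : ‖g‖ = 1 := hL.isLune.1
  refine ⟨g, ⟨hg, fun x hx ↦ (hL.subset hx).1, hL.scCenter_mem hC ht, inner_scCenter_left hg h⟩,
    ?_⟩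
  rintro m ⟨hm, hmC, -, hmc⟩
  have hmh : ⟪m, h⟫ = ⟪g, h⟫ * ⟪m, g⟫ := by
    conv_lhs => rw [eq_inner_smul_add_smul_scCenter g h]
    rw [inner_add_right, real_inner_smul_right, real_inner_smul_right, hmc, mul_zero, add_zero]
  have hle := hL.inner_le_inner hC.2.2 hm hmC
  have hmg : ⟪m, g⟫ ≤ 1 := (real_inner_le_norm m g).trans (by rw [hm, hg, one_mul])
  have htpos := hL.inner_pos ht
  exact (inner_eq_one_iff_of_norm_eq_one hm hg).1 (le_antisymm hmg (by nlinarith))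

end IsThinnestLune

/-- Let C ⊂ S^d be a spherical convex body with Δ(C) > π/2 and L = G ∩ H a
lune containing C with Δ(L) = Δ(C). Then the centers of the two hemispheres
bounding L belong to the boundary of C and both are smooth points. -/
theorem stmt_16 (d : ℕ) (C : Set (Esp (d + 1))) (hC : SphBody C)
    (ht : Real.pi / 2 < thick C) (g h : Esp (d + 1)) (hl : IsLune g h)
    (hsub : C ⊆ Lune g h) (heq : lthick g h = thick C) :
    scCenter g h ∈ sphBoundary C ∧ scCenter h g ∈ sphBoundary C ∧
    SmoothPoint C (scCenter g h) ∧ SmoothPoint C (scCenter h g) := by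
  have hL : IsThinnestLune C g h := ⟨hl, hsub, heq⟩
  exact ⟨hL.scCenter_mem_sphBoundary hC ht, hL.symm.scCenter_mem_sphBoundary hC ht,
    hL.smoothPoint_scCenter hC ht, hL.symm.smoothPoint_scCenter hC ht⟩
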